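/- arXiv:1511.05202 — 8 statements merged into one kernel-verified Lean document; each statement's English description precedes it below -/
import Mathlib

section
/- Theorem 1: Let ℓ be a binary label function on a ranked list of N = m + n documents, with m ≥ 1 positions labeled 1 and n ≥ 1 positions labeled 0. Then for every pair of positions i, j ∈ {1,…,N}, the change in AUC caused by swapping positions i and j satisfies AUC(swap_{ij}(ℓ)) − AUC(ℓ) = (ℓ(j) − ℓ(i))·(j − i) / (m·n). -/
/-- The number of correct pairs of a binary label function `ℓ` on positions `Fin N`:
pairs `(a, b)` with `a < b`, `ℓ a = 1` and `ℓ b = 0`. -/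
def correctPairs {N : ℕ} (ℓ : Fin N → ℕ) : ℕ :=
  (Finset.univ.filter (fun p : Fin N × Fin N => p.1 < p.2 ∧ ℓ p.1 = 1 ∧ ℓ p.2 = 0)).card

/-- The number of positions with label 1 (positive documents). -/
def numPos {N : ℕ} (ℓ : Fin N → ℕ) : ℕ :=
  (Finset.univ.filter (fun k => ℓ k = 1)).card

/-- The number of positions with label 0 (negative documents). -/
def numNeg {N : ℕ} (ℓ : Fin N → ℕ) : ℕ :=
  (Finset.univ.filter (fun k => ℓ k = 0)).card

/-- `AUC(ℓ) = CorrectPairs(ℓ) / (m · n)` where `m` (resp. `n`) is the number of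
positive (resp. negative) positions. -/
noncomputable def AUC {N : ℕ} (ℓ : Fin N → ℕ) : ℚ :=
  (correctPairs ℓ : ℚ) / ((numPos ℓ : ℚ) * (numNeg ℓ : ℚ))

open Finset

variable {N : ℕ}

private def PP (N : ℕ) : Finset (Fin N × Fin N) := univ.filter (fun p => p.1 < p.2)

lemma card_filter_comp_equiv (e : Fin N ≃ Fin N) (p : Fin N → Prop) [DecidablePred p] :
    (univ.filter fun k => p (e k)).card = (univ.filter p).card := by
  apply Finset.card_nbij (fun a => e a)
  · intro a ha; simp_all
  · intro a _ b _ h; exact e.injective h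
  · intro b hb; exact ⟨e.symm b, by simp_all, by simp⟩

lemma sum_sq_split (L : Fin N → ℚ) :
    2 * ∑ p ∈ PP N, L p.1 * L p.2 = (∑ k, L k)^2 - ∑ k, (L k)^2 := by
  have h1 : (∑ k, L k)^2 = ∑ p : Fin N × Fin N, L p.1 * L p.2 := by
    rw [sq, Finset.sum_mul_sum, Fintype.sum_prod_type]
  have h2 : ∑ p : Fin N × Fin N, L p.1 * L p.2 =
      (∑ p ∈ PP N, L p.1 * L p.2) +
      ((∑ p ∈ univ.filter (fun p : Fin N × Fin N => p.2 < p.1), L p.1 * L p.2) +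
       (∑ p ∈ univ.filter (fun p : Fin N × Fin N => p.1 = p.2), L p.1 * L p.2)) := by
    rw [← Finset.sum_filter_add_sum_filter_not univ (fun p : Fin N × Fin N => p.1 < p.2)]
    congr 1
    rw [← Finset.sum_filter_add_sum_filter_not (univ.filter (fun p : Fin N × Fin N => ¬ p.1 < p.2)) (fun p : Fin N × Fin N => p.2 < p.1), Finset.filter_filter, Finset.filter_filter]
    congr 2
    · apply Finset.filter_congr; intro p _; constructor
      · exact fun h => h.2
      · exact fun h => ⟨asymm h, h⟩
    · apply Finset.filter_congr; intro p _; constructor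
      · intro h; omega
      · intro h; omega
  have h3 : ∑ p ∈ univ.filter (fun p : Fin N × Fin N => p.2 < p.1), L p.1 * L p.2 =
      ∑ p ∈ PP N, L p.1 * L p.2 := by
    apply Finset.sum_nbij' (i := Prod.swap) (j := Prod.swap) <;>
      simp [PP, mul_comm]
  have h4 : ∑ p ∈ univ.filter (fun p : Fin N × Fin N => p.1 = p.2), L p.1 * L p.2 =
      ∑ k, (L k)^2 := by
    apply Finset.sum_nbij' (i := fun p => p.1) (j := fun a => (a, a))
    · simp
    · simp
    · intro p hp; simp at hp; simp [Prod.ext_iff, hp]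
    · simp
    · intro p hp; simp at hp; rw [← hp]; ring
  rw [h1, h2, h3, h4]; ring

lemma sum_prod_comp (e : Fin N ≃ Fin N) (L : Fin N → ℚ) :
    ∑ p ∈ PP N, L (e p.1) * L (e p.2) = ∑ p ∈ PP N, L p.1 * L p.2 := by
  have h1 := sum_sq_split (fun k => L (e k))
  have h2 := sum_sq_split L
  have e1 : ∑ k, L (e k) = ∑ k, L k := Equiv.sum_comp e L
  have e2 : ∑ k, (L (e k))^2 = ∑ k, (L k)^2 := Equiv.sum_comp e (fun k => (L k)^2)
  rw [e1, e2, ← h2] at h1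
  linarith

lemma sum_fst_weighted (f : Fin N → ℚ) :
    ∑ p ∈ PP N, f p.1 = ∑ a, f a * ((N : ℚ) - 1 - a.val) := by
  rw [PP, Finset.sum_filter, Fintype.sum_prod_type]
  apply Finset.sum_congr rfl
  intro a _
  have : ∑ b, (if a < b then f a else 0) = ∑ b ∈ Finset.Ioi a, f a := by
    rw [← Finset.sum_filter]
    congr 1
    ext b; simp
  rw [this, Finset.sum_const, Fin.card_Ioi, nsmul_eq_mul]
  have ha : (a : ℕ) < N := a.isLt
  have : ((N - 1 - a.val : ℕ) : ℚ) = (N : ℚ) - 1 - a.val := by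
    have h1 : a.val ≤ N - 1 := by omega
    push_cast [Nat.sub_sub]
    rw [Nat.cast_sub (by omega)]
    push_cast; ring
  rw [this]; ring

lemma correctPairs_eq_sum (ℓ : Fin N → ℕ) (hbin : ∀ k, ℓ k = 0 ∨ ℓ k = 1) :
    (correctPairs ℓ : ℚ) = ∑ p ∈ PP N, (ℓ p.1 : ℚ) * (1 - (ℓ p.2 : ℚ)) := by
  have : correctPairs ℓ = ((PP N).filter (fun p => ℓ p.1 = 1 ∧ ℓ p.2 = 0)).card := by
    rw [correctPairs, PP, Finset.filter_filter]
  rw [this, Finset.card_filter]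
  push_cast
  apply Finset.sum_congr rfl
  intro p _
  rcases hbin p.1 with h1 | h1 <;> rcases hbin p.2 with h2 | h2 <;> simp [h1, h2]

/-- Theorem 1: for a binary label function on `N = m + n` documents with `m ≥ 1`
positives and `n ≥ 1` negatives, swapping positions `i` and `j` changes the AUC by
`(ℓ(j) − ℓ(i))·(j − i)/(m·n)`. -/
theorem deltaAUC_swap {N m n : ℕ} (ℓ : Fin N → ℕ)
    (hbin : ∀ k, ℓ k = 0 ∨ ℓ k = 1)
    (hm : numPos ℓ = m) (hn : numNeg ℓ = n)
    (hm1 : 1 ≤ m) (hn1 : 1 ≤ n) (hN : N = m + n)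
    (i j : Fin N) :
    AUC (ℓ ∘ Equiv.swap i j) - AUC ℓ =
      ((ℓ j : ℚ) - (ℓ i : ℚ)) * ((j.val : ℚ) - (i.val : ℚ)) / ((m : ℚ) * (n : ℚ)) := by
  set e := Equiv.swap i j with he
  have hbin' : ∀ k, (ℓ ∘ e) k = 0 ∨ (ℓ ∘ e) k = 1 := fun k => hbin (e k)
  have hm' : numPos (ℓ ∘ e) = m := by
    rw [← hm]; exact card_filter_comp_equiv e (fun k => ℓ k = 1)
  have hn' : numNeg (ℓ ∘ e) = n := by
    rw [← hn]; exact card_filter_comp_equiv e (fun k => ℓ k = 0)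
  have key : (correctPairs (ℓ ∘ e) : ℚ) - correctPairs ℓ =
      ((ℓ j : ℚ) - (ℓ i : ℚ)) * ((j.val : ℚ) - (i.val : ℚ)) := by
    rw [correctPairs_eq_sum (ℓ ∘ e) hbin', correctPairs_eq_sum ℓ hbin,
        ← Finset.sum_sub_distrib]
    have expand : ∀ p ∈ PP N,
        ((ℓ ∘ e) p.1 : ℚ) * (1 - ((ℓ ∘ e) p.2 : ℚ)) - (ℓ p.1 : ℚ) * (1 - (ℓ p.2 : ℚ))
        = (((ℓ (e p.1) : ℚ)) - (ℓ p.1 : ℚ))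
          - (((ℓ (e p.1) : ℚ)) * (ℓ (e p.2) : ℚ) - (ℓ p.1 : ℚ) * (ℓ p.2 : ℚ)) := by
      intro p _; simp only [Function.comp_apply]; ring
    rw [Finset.sum_congr rfl expand]
    simp only [Finset.sum_sub_distrib]
    rw [sum_prod_comp e (fun k => (ℓ k : ℚ)), sub_self, sub_zero,
        sum_fst_weighted (fun a => (ℓ (e a) : ℚ)), sum_fst_weighted (fun a => (ℓ a : ℚ)),
        ← Finset.sum_sub_distrib]
    rw [Finset.sum_congr rfl (fun a _ => by ring :
      ∀ a ∈ (Finset.univ : Finset (Fin N)),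
        (ℓ (e a) : ℚ) * ((N : ℚ) - 1 - (a.val : ℚ)) - (ℓ a : ℚ) * ((N : ℚ) - 1 - (a.val : ℚ))
        = ((ℓ (e a) : ℚ) - (ℓ a : ℚ)) * ((N : ℚ) - 1 - (a.val : ℚ)))]
    have hz : ∀ a ∈ (Finset.univ : Finset (Fin N)), a ∉ ({i, j} : Finset (Fin N)) →
        (((ℓ (e a) : ℚ)) - (ℓ a : ℚ)) * ((N : ℚ) - 1 - (a.val : ℚ)) = 0 := by
      intro a _ ha
      simp only [Finset.mem_insert, Finset.mem_singleton, not_or] at ha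
      rw [he, Equiv.swap_apply_of_ne_of_ne ha.1 ha.2, sub_self, zero_mul]
    rw [← Finset.sum_subset (Finset.subset_univ ({i, j} : Finset (Fin N))) hz]
    by_cases hij : i = j
    · subst hij; simp [he]
    · rw [Finset.sum_pair hij, he, Equiv.swap_apply_left, Equiv.swap_apply_right]
      ring
  rw [AUC, AUC, hm', hn', hm, hn, div_sub_div_same, key]
end

section
/- Let ℓ be a binary label function on a ranked list of N documents. Then for every pair of positions i, j ∈ {1,…,N}, the change in the number of correct pairs caused by swapping positions i and j satisfies CorrectPairs(swap_{ij}(ℓ)) − CorrectPairs(ℓ) = (ℓ(j) − ℓ(i))·(j − i), as an identity of integers. -/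
open Finset

section Aux
variable {N : ℕ}

/-- The strict-lower-triangle pair set. -/
private def P (N : ℕ) : Finset (Fin N × Fin N) :=
  Finset.univ.filter (fun p => p.1 < p.2)

/-- Cast `correctPairs` as an integer sum of products. -/
private lemma correctPairs_cast (ℓ : Fin N → ℕ) (hbin : ∀ k, ℓ k = 0 ∨ ℓ k = 1) :
    (correctPairs ℓ : ℤ) =
      ∑ p ∈ P N, (ℓ p.1 : ℤ) * (1 - (ℓ p.2 : ℤ)) := by
  have h1 : (Finset.univ.filter
      (fun p : Fin N × Fin N => p.1 < p.2 ∧ ℓ p.1 = 1 ∧ ℓ p.2 = 0)) =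
      (P N).filter (fun p => ℓ p.1 = 1 ∧ ℓ p.2 = 0) := by
    rw [P, Finset.filter_filter]
  rw [correctPairs, h1, Finset.card_filter]
  push_cast
  refine Finset.sum_congr rfl (fun p _ => ?_)
  rcases hbin p.1 with h1 | h1 <;> rcases hbin p.2 with h2 | h2 <;>
    simp [h1, h2]

private lemma sum_lt_eq_sum_gt (g : Fin N → ℤ) :
    ∑ p ∈ Finset.univ.filter (fun p : Fin N × Fin N => p.2 < p.1), g p.1 * g p.2
      = ∑ p ∈ P N, g p.1 * g p.2 := by
  refine Finset.sum_nbij' Prod.swap Prod.swap ?_ ?_ ?_ ?_ ?_ <;>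
    simp [P, mul_comm]

private lemma two_mul_sum_P (g : Fin N → ℤ) :
    2 * ∑ p ∈ P N, g p.1 * g p.2 =
      ∑ p ∈ Finset.univ.filter (fun p : Fin N × Fin N => p.1 ≠ p.2), g p.1 * g p.2 := by
  rw [two_mul]
  nth_rewrite 1 [← sum_lt_eq_sum_gt g]
  rw [← Finset.sum_filter_add_sum_filter_not
    (Finset.univ.filter (fun p : Fin N × Fin N => p.1 ≠ p.2)) (fun p => p.2 < p.1)]
  have e1 : (Finset.univ.filter (fun p : Fin N × Fin N => p.1 ≠ p.2)).filter
      (fun p => p.2 < p.1) = Finset.univ.filter (fun p : Fin N × Fin N => p.2 < p.1) := by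
    ext p
    simp only [Finset.mem_filter, Finset.mem_univ, true_and]
    exact ⟨fun h => h.2, fun h => ⟨h.ne', h⟩⟩
  have e2 : (Finset.univ.filter (fun p : Fin N × Fin N => p.1 ≠ p.2)).filter
      (fun p => ¬ p.2 < p.1) = P N := by
    ext p
    simp only [P, Finset.mem_filter, Finset.mem_univ, true_and]
    constructor
    · exact fun h => lt_of_le_of_ne (not_lt.mp h.2) h.1
    · exact fun h => ⟨h.ne, not_lt.mpr h.le⟩
  rw [e1, e2]

private lemma sum_ne_perm (σ : Equiv.Perm (Fin N)) (g : Fin N → ℤ) :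
    ∑ p ∈ Finset.univ.filter (fun p : Fin N × Fin N => p.1 ≠ p.2), g (σ p.1) * g (σ p.2)
      = ∑ p ∈ Finset.univ.filter (fun p : Fin N × Fin N => p.1 ≠ p.2), g p.1 * g p.2 := by
  refine Finset.sum_equiv (Equiv.prodCongr σ σ) ?_ ?_ <;> simp

private lemma sum_P_perm (σ : Equiv.Perm (Fin N)) (g : Fin N → ℤ) :
    ∑ p ∈ P N, g (σ p.1) * g (σ p.2) = ∑ p ∈ P N, g p.1 * g p.2 := by
  have h := two_mul_sum_P (fun k => g (σ k))
  rw [sum_ne_perm σ g, ← two_mul_sum_P g] at h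
  exact mul_left_cancel₀ (by norm_num) h

private lemma sum_P_fst (g : Fin N → ℤ) :
    ∑ p ∈ P N, g p.1 = ∑ a : Fin N, g a * ((N - 1 - a.val : ℕ) : ℤ) := by
  rw [P, Finset.sum_filter, Fintype.sum_prod_type]
  refine Finset.sum_congr rfl (fun a _ => ?_)
  show ∑ b : Fin N, (if a < b then g a else 0) = _
  have hb : ∑ b : Fin N, (if a < b then g a else 0) = ∑ b ∈ Finset.Ioi a, g a := by
    rw [← Finset.sum_filter]
    congr 1
    ext b
    simp
  rw [hb, Finset.sum_const, Fin.card_Ioi, nsmul_eq_mul, mul_comm]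

end Aux

/-- Swapping positions `i` and `j` changes the number of correct pairs by
`(ℓ(j) − ℓ(i))·(j − i)`, as an identity of integers. -/
theorem deltaCorrectPairs_swap {N : ℕ} (ℓ : Fin N → ℕ)
    (hbin : ∀ k, ℓ k = 0 ∨ ℓ k = 1)
    (i j : Fin N) :
    (correctPairs (ℓ ∘ Equiv.swap i j) : ℤ) - (correctPairs ℓ : ℤ) =
      ((ℓ j : ℤ) - (ℓ i : ℤ)) * ((j.val : ℤ) - (i.val : ℤ)) := by
  set σ := Equiv.swap i j with hσ
  set g : Fin N → ℤ := fun k => (ℓ k : ℤ) with hg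
  have hbin' : ∀ k, (ℓ ∘ σ) k = 0 ∨ (ℓ ∘ σ) k = 1 := fun k => hbin (σ k)
  rw [correctPairs_cast (ℓ ∘ σ) hbin', correctPairs_cast ℓ hbin]
  have expand : ∀ h : Fin N → ℤ,
      ∑ p ∈ P N, h p.1 * (1 - h p.2)
        = ∑ p ∈ P N, h p.1 - ∑ p ∈ P N, h p.1 * h p.2 := by
    intro h
    rw [← Finset.sum_sub_distrib]
    exact Finset.sum_congr rfl (fun p _ => by ring)
  show (∑ p ∈ P N, g (σ p.1) * (1 - g (σ p.2))) - ∑ p ∈ P N, g p.1 * (1 - g p.2) = _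
  rw [expand (fun k => g (σ k)), expand g, sum_P_perm σ g,
    sum_P_fst (fun k => g (σ k)), sum_P_fst g, sub_sub_sub_cancel_right,
    ← Finset.sum_sub_distrib]
  have hsum : ∀ a : Fin N, g (σ a) * ((N - 1 - a.val : ℕ) : ℤ)
      - g a * ((N - 1 - a.val : ℕ) : ℤ) = (g (σ a) - g a) * ((N - 1 - a.val : ℕ) : ℤ) :=
    fun a => by ring
  simp_rw [hsum]
  by_cases hij : i = j
  · subst hij
    simp [hσ, Equiv.swap_self]
  · rw [← Finset.sum_subset (Finset.subset_univ ({i, j} : Finset (Fin N)))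
      (fun a _ ha => ?_), Finset.sum_pair hij]
    · rw [hσ, Equiv.swap_apply_left, Equiv.swap_apply_right]
      have hi : i.val < N := i.isLt
      have hj : j.val < N := j.isLt
      rw [Nat.cast_sub (by omega), Nat.cast_sub (by omega),
        Nat.cast_sub (by omega), Nat.cast_sub (by omega)]
      push_cast
      ring
    · have h1 : a ≠ i := fun h => ha (by simp [h])
      have h2 : a ≠ j := fun h => ha (by simp [h])
      rw [hσ, Equiv.swap_apply_of_ne_of_ne h1 h2, sub_self, zero_mul]
end

section
/- Lemma 1 (localization of the correct-pair change): Let ℓ be a binary label function on a ranked list of N documents and let i < j be positions. Then the total change in the number of correct pairs caused by swapping positions i and j equals the change in the number of correct pairs among pairs of positions lying within the interval [i, j]; that is, CorrectPairs(swap_{ij}(ℓ)) − CorrectPairs(ℓ) = CorrectPairs_{[i,j]}(swap_{ij}(ℓ)) − CorrectPairs_{[i,j]}(ℓ). -/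
/-- The number of correct pairs `(a, b)` with `i ≤ a < b ≤ j`. -/
def correctPairsIn {N : ℕ} (ℓ : Fin N → ℕ) (i j : Fin N) : ℕ :=
  (Finset.univ.filter (fun p : Fin N × Fin N =>
    i ≤ p.1 ∧ p.1 < p.2 ∧ p.2 ≤ j ∧ ℓ p.1 = 1 ∧ ℓ p.2 = 0)).card

lemma swap_outside_key {N : ℕ} (i j : Fin N) (hij : i < j) {a b : Fin N}
    (hab : a < b) (h : a < i ∨ j < b) :
    Equiv.swap i j a < Equiv.swap i j b ∧ (Equiv.swap i j a < i ∨ j < Equiv.swap i j b) := by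
  rcases h with h | h
  · have ha : Equiv.swap i j a = a := Equiv.swap_apply_of_ne_of_ne h.ne (h.trans hij).ne
    rw [ha]
    refine ⟨?_, Or.inl h⟩
    rcases eq_or_ne b i with rfl | hbi
    · rw [Equiv.swap_apply_left]; exact h.trans hij
    rcases eq_or_ne b j with rfl | hbj
    · rw [Equiv.swap_apply_right]; exact h
    · rw [Equiv.swap_apply_of_ne_of_ne hbi hbj]; exact hab
  · have hb : Equiv.swap i j b = b := Equiv.swap_apply_of_ne_of_ne (hij.trans h).ne' h.ne'
    rw [hb]
    refine ⟨?_, Or.inr h⟩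
    rcases eq_or_ne a i with rfl | hai
    · rw [Equiv.swap_apply_left]; exact h
    rcases eq_or_ne a j with rfl | haj
    · rw [Equiv.swap_apply_right]; exact hij.trans h
    · rw [Equiv.swap_apply_of_ne_of_ne hai haj]; exact hab

/-- Lemma 1 (localization): the total change in the number of correct pairs caused by
swapping positions `i < j` equals the change in the number of correct pairs among pairs
of positions lying within the interval `[i, j]`. -/
theorem deltaCorrectPairs_localization {N : ℕ} (ℓ : Fin N → ℕ)
    (hbin : ∀ k, ℓ k = 0 ∨ ℓ k = 1)
    (i j : Fin N) (hij : i < j) :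
    (correctPairs (ℓ ∘ Equiv.swap i j) : ℤ) - (correctPairs ℓ : ℤ) =
      (correctPairsIn (ℓ ∘ Equiv.swap i j) i j : ℤ) - (correctPairsIn ℓ i j : ℤ) := by
  set out : (Fin N → ℕ) → ℕ := fun f =>
    (Finset.univ.filter (fun p : Fin N × Fin N =>
      p.1 < p.2 ∧ (p.1 < i ∨ j < p.2) ∧ f p.1 = 1 ∧ f p.2 = 0)).card with hout
  have split : ∀ f : Fin N → ℕ, correctPairs f = correctPairsIn f i j + out f := by
    intro f
    unfold correctPairs correctPairsIn
    rw [hout]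
    rw [← Finset.card_filter_add_card_filter_not
      (p := fun p : Fin N × Fin N => i ≤ p.1 ∧ p.2 ≤ j)]
    congr 1
    · rw [Finset.filter_filter]
      apply congrArg Finset.card
      apply Finset.filter_congr
      intro p _
      simp only [and_assoc]
      tauto
    · rw [Finset.filter_filter]
      apply congrArg Finset.card
      apply Finset.filter_congr
      intro p _
      simp only [not_and_or, not_le, and_assoc]
      tauto
  have hinv : ∀ x : Fin N, Equiv.swap i j (Equiv.swap i j x) = x := fun x =>
    Equiv.swap_apply_self i j x
  have houteq : out (ℓ ∘ Equiv.swap i j) = out ℓ := by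
    rw [hout]
    apply Finset.card_bij'
      (i := fun p _ => (Equiv.swap i j p.1, Equiv.swap i j p.2))
      (j := fun p _ => (Equiv.swap i j p.1, Equiv.swap i j p.2))
    · intro p hp
      simp only [Finset.mem_filter, Finset.mem_univ, true_and, Function.comp_apply] at hp ⊢
      obtain ⟨h1, h2, h3, h4⟩ := hp
      obtain ⟨k1, k2⟩ := swap_outside_key i j hij h1 h2
      exact ⟨k1, k2, h3, h4⟩
    · intro p hp
      simp only [Finset.mem_filter, Finset.mem_univ, true_and, Function.comp_apply, hinv] at hp ⊢
      obtain ⟨h1, h2, h3, h4⟩ := hp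
      obtain ⟨k1, k2⟩ := swap_outside_key i j hij h1 h2
      exact ⟨k1, k2, h3, h4⟩
    · intro p _; simp [hinv]
    · intro p _; simp [hinv]
  rw [split ℓ, split (ℓ ∘ Equiv.swap i j), houteq]
  push_cast
  ring
end

section
/- Lemma 2: Let ℓ be a binary label function on a ranked list of N documents and let i < j be positions. Then the change in the number of correct pairs within the interval [i, j] caused by swapping positions i and j satisfies CorrectPairs_{[i,j]}(swap_{ij}(ℓ)) − CorrectPairs_{[i,j]}(ℓ) = (ℓ(j) − ℓ(i))·(j − i), as an identity of integers. -/
/-- Lemma 2: for positions `i < j`, the change in the number of correct pairs within the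
interval `[i, j]` caused by swapping positions `i` and `j` equals
`(ℓ(j) − ℓ(i))·(j − i)`, as an identity of integers. -/
theorem deltaCorrectPairsIn_swap {N : ℕ} (ℓ : Fin N → ℕ)
    (hbin : ∀ k, ℓ k = 0 ∨ ℓ k = 1)
    (i j : Fin N) (hij : i < j) :
    (correctPairsIn (ℓ ∘ Equiv.swap i j) i j : ℤ) - (correctPairsIn ℓ i j : ℤ) =
      ((ℓ j : ℤ) - (ℓ i : ℤ)) * ((j.val : ℤ) - (i.val : ℤ)) := by
  classical
  set ℓ' : Fin N → ℕ := ℓ ∘ Equiv.swap i j with hℓ'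
  have hbin' : ∀ k, ℓ' k = 0 ∨ ℓ' k = 1 := fun k => hbin _
  set P : Finset (Fin N × Fin N) :=
    Finset.univ.filter (fun p => i ≤ p.1 ∧ p.1 < p.2 ∧ p.2 ≤ j) with hP
  have key : ∀ (m : Fin N → ℕ), (∀ k, m k = 0 ∨ m k = 1) →
      (correctPairsIn m i j : ℤ) = ∑ p ∈ P, (m p.1 : ℤ) * (1 - (m p.2 : ℤ)) := by
    intro m hm
    have h1 : correctPairsIn m i j
        = (P.filter (fun p => m p.1 = 1 ∧ m p.2 = 0)).card := by
      rw [hP, Finset.filter_filter]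
      unfold correctPairsIn
      congr 1
      apply Finset.filter_congr
      intro p _
      simp [and_assoc]
    rw [h1, Finset.card_filter]
    push_cast
    apply Finset.sum_congr rfl
    intro p _
    rcases hm p.1 with h|h <;> rcases hm p.2 with h2|h2 <;> simp [h, h2]
  rw [key ℓ hbin, key ℓ' hbin', ← Finset.sum_sub_distrib]
  set F : Fin N × Fin N → ℤ :=
    fun p => (ℓ' p.1 : ℤ) * (1 - (ℓ' p.2 : ℤ)) - (ℓ p.1 : ℤ) * (1 - (ℓ p.2 : ℤ)) with hF
  set Q1 : Finset (Fin N × Fin N) := (Finset.Ioc i j).image (fun b => (i, b)) with hQ1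
  set Q2 : Finset (Fin N × Fin N) := (Finset.Ioo i j).image (fun a => (a, j)) with hQ2
  have hmem1 : ∀ p : Fin N × Fin N, p ∈ Q1 ↔ p.1 = i ∧ i < p.2 ∧ p.2 ≤ j := by
    intro p
    simp only [hQ1, Finset.mem_image, Finset.mem_Ioc]
    constructor
    · rintro ⟨b, hb, rfl⟩; exact ⟨rfl, hb⟩
    · rintro ⟨h1, h2⟩; exact ⟨p.2, h2, by rw [← h1]⟩
  have hmem2 : ∀ p : Fin N × Fin N, p ∈ Q2 ↔ p.2 = j ∧ i < p.1 ∧ p.1 < j := by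
    intro p
    simp only [hQ2, Finset.mem_image, Finset.mem_Ioo]
    constructor
    · rintro ⟨a, ha, rfl⟩; exact ⟨rfl, ha⟩
    · rintro ⟨h1, h2⟩; exact ⟨p.1, h2, by rw [← h1]⟩
  have hdisj : Disjoint Q1 Q2 := by
    rw [Finset.disjoint_left]
    intro p h1 h2
    rw [hmem1] at h1; rw [hmem2] at h2
    exact absurd (h1.1 ▸ h2.2.1) (lt_irrefl i)
  have hsub : Q1 ∪ Q2 ⊆ P := by
    intro p hp
    rw [hP, Finset.mem_filter]
    refine ⟨Finset.mem_univ _, ?_⟩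
    rcases Finset.mem_union.mp hp with h | h
    · rw [hmem1] at h; exact ⟨le_of_eq h.1.symm, h.1 ▸ h.2.1, h.2.2⟩
    · rw [hmem2] at h; exact ⟨le_of_lt h.2.1, h.1 ▸ h.2.2, le_of_eq h.1⟩
  have hzero : ∀ p ∈ P, p ∉ Q1 ∪ Q2 → F p = 0 := by
    intro p hp hnq
    rw [hP, Finset.mem_filter] at hp
    obtain ⟨-, h1, h2, h3⟩ := hp
    rw [Finset.mem_union, not_or, hmem1, hmem2] at hnq
    have hp1i : p.1 ≠ i := by
      intro h; exact hnq.1 ⟨h, h ▸ h2, h3⟩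
    have hp2j : p.2 ≠ j := by
      intro h
      exact hnq.2 ⟨h, lt_of_le_of_ne h1 (Ne.symm hp1i), h ▸ h2⟩
    have hp1j : p.1 ≠ j := ne_of_lt (lt_of_lt_of_le h2 h3)
    have hp2i : p.2 ≠ i := ne_of_gt (lt_of_le_of_lt h1 h2)
    have e1 : ℓ' p.1 = ℓ p.1 := by
      rw [hℓ']; simp [Equiv.swap_apply_of_ne_of_ne hp1i hp1j]
    have e2 : ℓ' p.2 = ℓ p.2 := by
      rw [hℓ']; simp [Equiv.swap_apply_of_ne_of_ne hp2i hp2j]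
    simp [hF, e1, e2]
  rw [← Finset.sum_subset hsub hzero, Finset.sum_union hdisj]
  have hinj1 : Set.InjOn (fun b => ((i, b) : Fin N × Fin N)) (Finset.Ioc i j) := by
    intro a _ b _ h; exact (Prod.mk.injEq _ _ _ _ ▸ h).2
  have hinj2 : Set.InjOn (fun a => ((a, j) : Fin N × Fin N)) (Finset.Ioo i j) := by
    intro a _ b _ h; exact (Prod.mk.injEq _ _ _ _ ▸ h).1
  rw [hQ1, hQ2, Finset.sum_image hinj1, Finset.sum_image hinj2]
  rw [← Finset.Ioo_insert_right hij, Finset.sum_insert Finset.right_notMem_Ioo]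
  have eii : ℓ' i = ℓ j := by rw [hℓ']; simp
  have ejj : ℓ' j = ℓ i := by rw [hℓ']; simp
  have hFij : F (i, j) = (ℓ j : ℤ) * (1 - ℓ i) - (ℓ i : ℤ) * (1 - ℓ j) := by
    simp [hF, eii, ejj]
  have hsum1 : ∀ b ∈ Finset.Ioo i j, F (i, b)
      = ((ℓ j : ℤ) - ℓ i) * (1 - (ℓ b : ℤ)) := by
    intro b hb
    rw [Finset.mem_Ioo] at hb
    have e : ℓ' b = ℓ b := by
      rw [hℓ']; simp [Equiv.swap_apply_of_ne_of_ne (ne_of_gt hb.1) (ne_of_lt hb.2)]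
    simp only [hF, eii, e]
    ring
  have hsum2 : ∀ a ∈ Finset.Ioo i j, F (a, j)
      = (ℓ a : ℤ) * ((ℓ j : ℤ) - ℓ i) := by
    intro a ha
    rw [Finset.mem_Ioo] at ha
    have e : ℓ' a = ℓ a := by
      rw [hℓ']; simp [Equiv.swap_apply_of_ne_of_ne (ne_of_gt ha.1) (ne_of_lt ha.2)]
    simp only [hF, ejj, e]
    ring
  rw [Finset.sum_congr rfl hsum1, Finset.sum_congr rfl hsum2, hFij]
  have hcomb : ∑ b ∈ Finset.Ioo i j, ((ℓ j : ℤ) - ℓ i) * (1 - (ℓ b : ℤ))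
      + ∑ a ∈ Finset.Ioo i j, (ℓ a : ℤ) * ((ℓ j : ℤ) - ℓ i)
      = ((Finset.Ioo i j).card : ℤ) * ((ℓ j : ℤ) - ℓ i) := by
    rw [← Finset.sum_add_distrib]
    have h : ∀ b ∈ Finset.Ioo i j,
        ((ℓ j : ℤ) - ℓ i) * (1 - (ℓ b : ℤ)) + (ℓ b : ℤ) * ((ℓ j : ℤ) - ℓ i)
        = ((ℓ j : ℤ) - ℓ i) := by intro b _; ring
    rw [Finset.sum_congr rfl h, Finset.sum_const, nsmul_eq_mul]
  rw [add_assoc, hcomb, Fin.card_Ioo]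
  have hlt : i.val < j.val := hij
  have hc : ((j.val - i.val - 1 : ℕ) : ℤ) = (j.val : ℤ) - i.val - 1 := by omega
  rw [hc]; ring
end

section
/- Case ℓ(i) = 1, ℓ(j) = 0 of Lemma 2: Let ℓ be a binary label function on a ranked list of N documents and let i < j be positions with ℓ(i) = 1 and ℓ(j) = 0. Then, among pairs (a, b) with i ≤ a < b ≤ j, exactly j − i pairs are correct before swapping positions i and j but not correct after the swap, and no such pair changes from not correct to correct; consequently CorrectPairs_{[i,j]}(swap_{ij}(ℓ)) − CorrectPairs_{[i,j]}(ℓ) = −(j − i). -/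
/-- `(a, b)` is a correct pair for `ℓ`: `a < b`, `ℓ a = 1`, `ℓ b = 0`. -/
def CorrectPair {N : ℕ} (ℓ : Fin N → ℕ) (a b : Fin N) : Prop :=
  a < b ∧ ℓ a = 1 ∧ ℓ b = 0

instance {N : ℕ} (ℓ : Fin N → ℕ) (a b : Fin N) : Decidable (CorrectPair ℓ a b) := by
  unfold CorrectPair; infer_instance

/-- Case `ℓ(i) = 1`, `ℓ(j) = 0` of Lemma 2: among pairs `(a, b)` with `i ≤ a < b ≤ j`,
exactly `j − i` pairs are correct before the swap of positions `i` and `j` but not after,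
no such pair changes from not correct to correct, and consequently the change in the
number of correct pairs within `[i, j]` is `−(j − i)`. -/
theorem deltaCorrectPairsIn_swap_pos_neg {N : ℕ} (ℓ : Fin N → ℕ)
    (hbin : ∀ k, ℓ k = 0 ∨ ℓ k = 1)
    (i j : Fin N) (hij : i < j) (hi : ℓ i = 1) (hj : ℓ j = 0) :
    (Finset.univ.filter (fun p : Fin N × Fin N =>
        i ≤ p.1 ∧ p.1 < p.2 ∧ p.2 ≤ j ∧
        CorrectPair ℓ p.1 p.2 ∧ ¬ CorrectPair (ℓ ∘ Equiv.swap i j) p.1 p.2)).card =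
      j.val - i.val ∧
    (Finset.univ.filter (fun p : Fin N × Fin N =>
        i ≤ p.1 ∧ p.1 < p.2 ∧ p.2 ≤ j ∧
        ¬ CorrectPair ℓ p.1 p.2 ∧ CorrectPair (ℓ ∘ Equiv.swap i j) p.1 p.2)) = ∅ ∧
    (correctPairsIn (ℓ ∘ Equiv.swap i j) i j : ℤ) - (correctPairsIn ℓ i j : ℤ) =
      -((j.val : ℤ) - (i.val : ℤ)) := by
  set ℓ' := ℓ ∘ Equiv.swap i j with hℓ'
  have hne : i ≠ j := ne_of_lt hij
  have h'i : ℓ' i = 0 := by simp [hℓ', Equiv.swap_apply_left, hj]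
  have h'j : ℓ' j = 1 := by simp [hℓ', Equiv.swap_apply_right, hi]
  have h'other : ∀ k : Fin N, k ≠ i → k ≠ j → ℓ' k = ℓ k := by
    intro k hki hkj
    simp [hℓ', Equiv.swap_apply_of_ne_of_ne hki hkj]
  -- the "lost" set has card j - i
  have hlost : (Finset.univ.filter (fun p : Fin N × Fin N =>
        i ≤ p.1 ∧ p.1 < p.2 ∧ p.2 ≤ j ∧
        CorrectPair ℓ p.1 p.2 ∧ ¬ CorrectPair ℓ' p.1 p.2)).card = j.val - i.val := by
    rw [← Fin.card_Ico (a := i) (b := j)]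
    apply Finset.card_bij' (fun p _ => if p.2 = j then p.1 else p.2)
      (fun k _ => if ℓ k = 1 then (k, j) else (i, k))
    · rintro ⟨a, b⟩ hp
      simp only [Finset.mem_filter, Finset.mem_univ, true_and] at hp
      obtain ⟨hia, hab, hbj, hc, hnc⟩ := hp
      by_cases hbj' : b = j
      · simp only [hbj', if_pos rfl, Finset.mem_Ico]
        exact ⟨hia, hbj' ▸ hab⟩
      · -- then a = i
        simp only [if_neg hbj', Finset.mem_Ico]
        constructor
        · exact le_of_lt (lt_of_le_of_lt hia hab)
        · exact lt_of_le_of_ne hbj hbj'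
    · rintro k hk
      simp only [Finset.mem_Ico] at hk
      obtain ⟨hik, hkj⟩ := hk
      by_cases h1 : ℓ k = 1
      · simp only [if_pos h1, Finset.mem_filter, Finset.mem_univ, true_and]
        refine ⟨hik, hkj, le_refl _, ⟨hkj, h1, hj⟩, ?_⟩
        rintro ⟨-, -, hb0⟩
        rw [h'j] at hb0; exact one_ne_zero hb0
      · have h0 : ℓ k = 0 := (hbin k).resolve_right h1
        have hki : k ≠ i := fun h => h1 (h ▸ hi)
        have hik' : i < k := lt_of_le_of_ne hik (Ne.symm hki)
        simp only [if_neg h1, Finset.mem_filter, Finset.mem_univ, true_and]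
        refine ⟨le_refl _, hik', le_of_lt hkj, ⟨hik', hi, h0⟩, ?_⟩
        rintro ⟨-, ha1, -⟩
        rw [h'i] at ha1; exact zero_ne_one ha1
    · rintro ⟨a, b⟩ hp
      simp only [Finset.mem_filter, Finset.mem_univ, true_and] at hp
      obtain ⟨hia, hab, hbj, hc, hnc⟩ := hp
      by_cases hbj' : b = j
      · have ha1 : ℓ a = 1 := hc.2.1
        simp [hbj', ha1]
      · -- a = i case: show a = i
        have hbi : b ≠ i := ne_of_gt (lt_of_le_of_lt hia hab)
        have hb0 : ℓ b = 0 := hc.2.2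
        have hai : a = i := by
          by_contra hai
          apply hnc
          have hai' : a ≠ i := hai
          have haj : a ≠ j := ne_of_lt (lt_of_lt_of_le hab hbj)
          refine ⟨hab, ?_, ?_⟩
          · rw [h'other a hai' haj]; exact hc.2.1
          · rw [h'other b hbi hbj']; exact hb0
        have hb1 : ℓ b ≠ 1 := by rw [hb0]; exact zero_ne_one
        simp [hbj', hai, hb1]
    · rintro k hk
      simp only [Finset.mem_Ico] at hk
      by_cases h1 : ℓ k = 1
      · simp [h1]
      · have hkj : k ≠ j := ne_of_lt hk.2
        simp [h1, hkj]
  -- the "gained" set is empty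
  have hgain : (Finset.univ.filter (fun p : Fin N × Fin N =>
        i ≤ p.1 ∧ p.1 < p.2 ∧ p.2 ≤ j ∧
        ¬ CorrectPair ℓ p.1 p.2 ∧ CorrectPair ℓ' p.1 p.2)) = ∅ := by
    ext ⟨a, b⟩
    simp only [Finset.mem_filter, Finset.mem_univ, true_and, Finset.notMem_empty,
      iff_false, not_and]
    intro hia hab hbj hnc hc
    have hai : a ≠ i := by
      rintro rfl
      rw [hc.2.1] at h'i; exact one_ne_zero h'i
    have hbj' : b ≠ j := by
      rintro rfl
      rw [hc.2.2] at h'j; exact zero_ne_one h'j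
    have haj : a ≠ j := ne_of_lt (lt_of_lt_of_le hab hbj)
    have hbi : b ≠ i := ne_of_gt (lt_of_le_of_lt hia hab)
    exact hnc ⟨hab, (h'other a hai haj) ▸ hc.2.1, (h'other b hbi hbj') ▸ hc.2.2⟩
  refine ⟨hlost, hgain, ?_⟩
  -- express correctPairsIn via CorrectPair
  have key : ∀ m : Fin N → ℕ, correctPairsIn m i j =
      (Finset.univ.filter (fun p : Fin N × Fin N =>
        i ≤ p.1 ∧ p.1 < p.2 ∧ p.2 ≤ j ∧ CorrectPair m p.1 p.2)).card := by
    intro m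
    unfold correctPairsIn
    congr 1
    apply Finset.filter_congr
    intro p _
    unfold CorrectPair
    constructor
    · rintro ⟨h1, h2, h3, h4, h5⟩; exact ⟨h1, h2, h3, h2, h4, h5⟩
    · rintro ⟨h1, h2, h3, _, h4, h5⟩; exact ⟨h1, h2, h3, h4, h5⟩
  -- split counts
  have split1 : correctPairsIn ℓ i j =
      (Finset.univ.filter (fun p : Fin N × Fin N =>
        i ≤ p.1 ∧ p.1 < p.2 ∧ p.2 ≤ j ∧ CorrectPair ℓ p.1 p.2 ∧
          CorrectPair ℓ' p.1 p.2)).card +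
      (Finset.univ.filter (fun p : Fin N × Fin N =>
        i ≤ p.1 ∧ p.1 < p.2 ∧ p.2 ≤ j ∧ CorrectPair ℓ p.1 p.2 ∧
          ¬ CorrectPair ℓ' p.1 p.2)).card := by
    rw [key ℓ, ← Finset.card_filter_add_card_filter_not
      (p := fun p : Fin N × Fin N => CorrectPair ℓ' p.1 p.2)]
    congr 1 <;> · rw [Finset.filter_filter]; congr 1; ext p; simp only [Finset.mem_filter]; tauto
  have split2 : correctPairsIn ℓ' i j =
      (Finset.univ.filter (fun p : Fin N × Fin N =>
        i ≤ p.1 ∧ p.1 < p.2 ∧ p.2 ≤ j ∧ CorrectPair ℓ' p.1 p.2 ∧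
          CorrectPair ℓ p.1 p.2)).card +
      (Finset.univ.filter (fun p : Fin N × Fin N =>
        i ≤ p.1 ∧ p.1 < p.2 ∧ p.2 ≤ j ∧ ¬ CorrectPair ℓ p.1 p.2 ∧
          CorrectPair ℓ' p.1 p.2)).card := by
    rw [key ℓ', ← Finset.card_filter_add_card_filter_not
      (p := fun p : Fin N × Fin N => CorrectPair ℓ p.1 p.2)]
    congr 1 <;> · rw [Finset.filter_filter]; congr 1; ext p; simp only [Finset.mem_filter]; tauto
  have hcomm : (Finset.univ.filter (fun p : Fin N × Fin N =>
        i ≤ p.1 ∧ p.1 < p.2 ∧ p.2 ≤ j ∧ CorrectPair ℓ' p.1 p.2 ∧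
          CorrectPair ℓ p.1 p.2)) =
      (Finset.univ.filter (fun p : Fin N × Fin N =>
        i ≤ p.1 ∧ p.1 < p.2 ∧ p.2 ≤ j ∧ CorrectPair ℓ p.1 p.2 ∧
          CorrectPair ℓ' p.1 p.2)) := by
    apply Finset.filter_congr; intro p _; tauto
  rw [split1, split2, hcomm, hgain, hlost, Finset.card_empty]
  have hle : i.val ≤ j.val := le_of_lt hij
  push_cast [Nat.cast_sub hle]
  ring
end

section
/- Case ℓ(i) = 0, ℓ(j) = 1 of Lemma 2: Let ℓ be a binary label function on a ranked list of N documents and let i < j be positions with ℓ(i) = 0 and ℓ(j) = 1. Then, among pairs (a, b) with i ≤ a < b ≤ j, exactly j − i pairs are not correct before swapping positions i and j but correct after the swap, and no such pair changes from correct to not correct; consequently CorrectPairs_{[i,j]}(swap_{ij}(ℓ)) − CorrectPairs_{[i,j]}(ℓ) = j − i. -/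
/-- Case `ℓ(i) = 0`, `ℓ(j) = 1` of Lemma 2: among pairs `(a, b)` with `i ≤ a < b ≤ j`,
exactly `j − i` pairs are not correct before the swap of positions `i` and `j` but
correct after, no such pair changes from correct to not correct, and consequently the
change in the number of correct pairs within `[i, j]` is `j − i`. -/
theorem deltaCorrectPairsIn_swap_neg_pos {N : ℕ} (ℓ : Fin N → ℕ)
    (hbin : ∀ k, ℓ k = 0 ∨ ℓ k = 1)
    (i j : Fin N) (hij : i < j) (hi : ℓ i = 0) (hj : ℓ j = 1) :
    (Finset.univ.filter (fun p : Fin N × Fin N =>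
        i ≤ p.1 ∧ p.1 < p.2 ∧ p.2 ≤ j ∧
        ¬ CorrectPair ℓ p.1 p.2 ∧ CorrectPair (ℓ ∘ Equiv.swap i j) p.1 p.2)).card =
      j.val - i.val ∧
    (Finset.univ.filter (fun p : Fin N × Fin N =>
        i ≤ p.1 ∧ p.1 < p.2 ∧ p.2 ≤ j ∧
        CorrectPair ℓ p.1 p.2 ∧ ¬ CorrectPair (ℓ ∘ Equiv.swap i j) p.1 p.2)) = ∅ ∧
    (correctPairsIn (ℓ ∘ Equiv.swap i j) i j : ℤ) - (correctPairsIn ℓ i j : ℤ) =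
      (j.val : ℤ) - (i.val : ℤ) := by
  set ℓ' : Fin N → ℕ := ℓ ∘ Equiv.swap i j with hℓ'
  have hne : i ≠ j := ne_of_lt hij
  have h'i : ℓ' i = ℓ j := by simp [hℓ', Equiv.swap_apply_left]
  have h'j : ℓ' j = ℓ i := by simp [hℓ', Equiv.swap_apply_right]
  have h'other : ∀ k, k ≠ i → k ≠ j → ℓ' k = ℓ k := by
    intro k h1 h2
    simp [hℓ', Equiv.swap_apply_of_ne_of_ne h1 h2]
  -- gained set
  set G := (Finset.univ.filter (fun p : Fin N × Fin N =>
        i ≤ p.1 ∧ p.1 < p.2 ∧ p.2 ≤ j ∧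
        ¬ CorrectPair ℓ p.1 p.2 ∧ CorrectPair ℓ' p.1 p.2)) with hG
  -- lost set
  set L := (Finset.univ.filter (fun p : Fin N × Fin N =>
        i ≤ p.1 ∧ p.1 < p.2 ∧ p.2 ≤ j ∧
        CorrectPair ℓ p.1 p.2 ∧ ¬ CorrectPair ℓ' p.1 p.2)) with hL
  have hGmem : ∀ p : Fin N × Fin N, p ∈ G ↔
      i ≤ p.1 ∧ p.1 < p.2 ∧ p.2 ≤ j ∧
        ¬ CorrectPair ℓ p.1 p.2 ∧ CorrectPair ℓ' p.1 p.2 := by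
    intro p; simp [hG]
  have hLmem : ∀ p : Fin N × Fin N, p ∈ L ↔
      i ≤ p.1 ∧ p.1 < p.2 ∧ p.2 ≤ j ∧
        CorrectPair ℓ p.1 p.2 ∧ ¬ CorrectPair ℓ' p.1 p.2 := by
    intro p; simp [hL]
  -- L is empty
  have hLe : L = ∅ := by
    rw [Finset.eq_empty_iff_forall_notMem]
    intro p hp
    rw [hLmem] at hp
    obtain ⟨h1, h2, h3, ⟨_, ha1, hb0⟩, hnc⟩ := hp
    have hai : p.1 ≠ i := by intro h; rw [h, hi] at ha1; omega
    have hbj : p.2 ≠ j := by intro h; rw [h, hj] at hb0; omega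
    have haj : p.1 ≠ j := ne_of_lt (lt_of_lt_of_le h2 h3)
    have hbi : p.2 ≠ i := ne_of_gt (lt_of_le_of_lt h1 h2)
    exact hnc ⟨h2, by rw [h'other _ hai haj]; exact ha1,
      by rw [h'other _ hbi hbj]; exact hb0⟩
  -- G has card j - i, via bijection with Ioc i j
  have hGcard : G.card = j.val - i.val := by
    rw [← Fin.card_Ioc i j]
    apply Finset.card_bij' (i := fun p _ => if p.1 = i then p.2 else p.1)
      (j := fun b _ => if ℓ b = 0 ∨ b = j then (i, b) else (b, j))
    · -- maps into Ioc
      intro p hp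
      rw [hGmem] at hp
      obtain ⟨h1, h2, h3, hnc, ⟨_, ha1, hb0⟩⟩ := hp
      by_cases hpi : p.1 = i
      · rw [if_pos hpi]
        rw [Finset.mem_Ioc]
        exact ⟨hpi ▸ h2, h3⟩
      · simp only [if_neg hpi]
        rw [Finset.mem_Ioc]
        refine ⟨lt_of_le_of_ne h1 (Ne.symm hpi), le_of_lt (lt_of_lt_of_le h2 h3)⟩
    · -- maps into G
      intro b hb
      rw [Finset.mem_Ioc] at hb
      obtain ⟨hib, hbj⟩ := hb
      by_cases hc : ℓ b = 0 ∨ b = j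
      · simp only [if_pos hc]
        rw [hGmem]
        refine ⟨le_refl i, hib, hbj, ?_, hib, by rw [h'i]; exact hj, ?_⟩
        · intro ⟨_, hc1, _⟩; rw [hi] at hc1; omega
        · rcases hc with hc | hc
          · by_cases hbj' : b = j
            · rw [hbj', h'j]; exact hi
            · rw [h'other _ (ne_of_gt hib) hbj']; exact hc
          · rw [hc, h'j]; exact hi
      · have hb0 : ℓ b ≠ 0 := fun h => hc (Or.inl h)
        have hbj' : b ≠ j := fun h => hc (Or.inr h)
        simp only [if_neg hc]
        rw [hGmem]
        have hb1 : ℓ b = 1 := (hbin b).resolve_left hb0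
        clear hc
        refine ⟨le_of_lt hib, lt_of_le_of_ne hbj hbj', le_refl j, ?_,
          lt_of_le_of_ne hbj hbj', ?_, by rw [h'j]; exact hi⟩
        · intro ⟨_, _, hc0⟩; rw [hj] at hc0; omega
        · rw [h'other _ (ne_of_gt hib) hbj']; exact hb1
    · -- left inverse
      intro p hp
      rw [hGmem] at hp
      obtain ⟨h1, h2, h3, hnc, ⟨_, ha1, hb0⟩⟩ := hp
      by_cases hpi : p.1 = i
      · rw [if_pos hpi]
        have : ℓ p.2 = 0 ∨ p.2 = j := by
          by_cases hbj : p.2 = j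
          · right; exact hbj
          · left
            have hbi : p.2 ≠ i := ne_of_gt (lt_of_le_of_lt h1 h2)
            rw [← h'other _ hbi hbj]; exact hb0
        rw [if_pos this]
        exact Prod.ext hpi.symm rfl
      · simp only [if_neg hpi]
        have haj : p.1 ≠ j := ne_of_lt (lt_of_lt_of_le h2 h3)
        have ha1' : ℓ p.1 = 1 := by rw [← h'other _ hpi haj]; exact ha1
        have : ¬ (ℓ p.1 = 0 ∨ p.1 = j) := by push_neg; exact ⟨by omega, haj⟩
        simp only [if_neg this]
        -- need p.2 = j
        have hbj : p.2 = j := by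
          by_contra hbj
          have hbi : p.2 ≠ i := ne_of_gt (lt_of_le_of_lt h1 h2)
          exact hnc ⟨h2, ha1', by rw [← h'other _ hbi hbj]; exact hb0⟩
        exact Prod.ext rfl hbj.symm
    · -- right inverse
      intro b hb
      rw [Finset.mem_Ioc] at hb
      by_cases hc : ℓ b = 0 ∨ b = j
      · simp [if_pos hc]
      · simp only [if_neg hc]
        have : b ≠ i := ne_of_gt hb.1
        simp [this]
  refine ⟨hGcard, hLe, ?_⟩
  -- now the counting part
  set T := (Finset.univ.filter (fun p : Fin N × Fin N =>
    i ≤ p.1 ∧ p.1 < p.2 ∧ p.2 ≤ j)) with hT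
  have hA : correctPairsIn ℓ' i j = (T.filter (fun p => CorrectPair ℓ' p.1 p.2)).card := by
    rw [hT, Finset.filter_filter]
    unfold correctPairsIn
    congr 1
    apply Finset.filter_congr
    intro p _
    unfold CorrectPair
    tauto
  have hB : correctPairsIn ℓ i j = (T.filter (fun p => CorrectPair ℓ p.1 p.2)).card := by
    rw [hT, Finset.filter_filter]
    unfold correctPairsIn
    congr 1
    apply Finset.filter_congr
    intro p _
    unfold CorrectPair
    tauto
  set A := T.filter (fun p => CorrectPair ℓ' p.1 p.2) with hAdef
  set B := T.filter (fun p => CorrectPair ℓ p.1 p.2) with hBdef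
  have hGAB : G = A \ B := by
    apply Finset.ext
    intro p
    rw [hGmem, Finset.mem_sdiff, hAdef, hBdef, Finset.mem_filter, Finset.mem_filter,
      hT, Finset.mem_filter, Finset.mem_filter]
    simp only [Finset.mem_univ, true_and]
    tauto
  have hLBA : B \ A = ∅ := by
    rw [← hLe]
    apply Finset.ext
    intro p
    rw [hLmem, Finset.mem_sdiff, hAdef, hBdef, Finset.mem_filter, Finset.mem_filter,
      hT, Finset.mem_filter, Finset.mem_filter]
    simp only [Finset.mem_univ, true_and]
    tauto
  have hBA : B ⊆ A := by
    intro p hp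
    by_contra h
    have : p ∈ B \ A := Finset.mem_sdiff.mpr ⟨hp, h⟩
    rw [hLBA] at this
    exact absurd this (Finset.notMem_empty p)
  have hcard : A.card = B.card + G.card := by
    rw [hGAB, Finset.card_sdiff_of_subset hBA]
    have := Finset.card_le_card hBA
    omega
  rw [hA, hB, hcard, hGcard]
  have : i.val ≤ j.val := le_of_lt hij
  push_cast
  omega
end

section
/- Identification of the changed pairs (case ℓ(i) = 1, ℓ(j) = 0): Let ℓ be a binary label function on a ranked list of N documents and let i < j be positions with ℓ(i) = 1 and ℓ(j) = 0. Then the set of pairs (a, b) with i ≤ a < b ≤ j that are correct for ℓ but not correct for swap_{ij}(ℓ) is exactly the union of the pairs (i, k) with i < k ≤ j and ℓ(k) = 0 and the pairs (k, j) with i ≤ k < j and ℓ(k) = 1, and this set has cardinality j − i. -/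
/-!
Swapping `i` and `j` only relabels the endpoints, so a pair inside `[i, j]` can lose its
correctness only if it starts at `i` (which becomes a `0`) or ends at `j` (which becomes a `1`);
conversely every such correct pair is lost. Sending `k ∈ [i, j)` to `(k, j)` if `ℓ k = 1` and
to `(i, k)` otherwise enumerates these pairs without repetition, whence `j − i` of them.
-/

open Finset

namespace CorrectPair

variable {N : ℕ} {ℓ : Fin N → ℕ} {i j a b : Fin N}

theorem comp_swap_iff (hai : a ≠ i) (haj : a ≠ j) (hbi : b ≠ i) (hbj : b ≠ j) :
    CorrectPair (ℓ ∘ Equiv.swap i j) a b ↔ CorrectPair ℓ a b := by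
  simp only [CorrectPair, Function.comp_apply, Equiv.swap_apply_of_ne_of_ne hai haj,
    Equiv.swap_apply_of_ne_of_ne hbi hbj]

theorem not_comp_swap_left (hj : ℓ j = 0) : ¬ CorrectPair (ℓ ∘ Equiv.swap i j) i b := by
  simp [CorrectPair, hj]

theorem not_comp_swap_right (hi : ℓ i = 1) : ¬ CorrectPair (ℓ ∘ Equiv.swap i j) a j := by
  simp [CorrectPair, hi]

end CorrectPair

section ChangedPairs

variable {N : ℕ} (ℓ : Fin N → ℕ) (i j : Fin N)

def changedPairs : Finset (Fin N × Fin N) :=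
  univ.filter (fun p : Fin N × Fin N =>
    i ≤ p.1 ∧ p.1 < p.2 ∧ p.2 ≤ j ∧
    CorrectPair ℓ p.1 p.2 ∧ ¬ CorrectPair (ℓ ∘ Equiv.swap i j) p.1 p.2)

def pairsFromLeft : Finset (Fin N × Fin N) :=
  univ.filter (fun p : Fin N × Fin N => p.1 = i ∧ i < p.2 ∧ p.2 ≤ j ∧ ℓ p.2 = 0)

def pairsToRight : Finset (Fin N × Fin N) :=
  univ.filter (fun p : Fin N × Fin N => p.2 = j ∧ i ≤ p.1 ∧ p.1 < j ∧ ℓ p.1 = 1)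

def changedPairOf (k : Fin N) : Fin N × Fin N :=
  if ℓ k = 1 then (k, j) else (i, k)

variable {ℓ i j}

theorem changedPairs_eq_union (hi : ℓ i = 1) (hj : ℓ j = 0) :
    changedPairs ℓ i j = pairsFromLeft ℓ i j ∪ pairsToRight ℓ i j := by
  ext ⟨a, b⟩
  simp only [changedPairs, pairsFromLeft, pairsToRight, mem_union, mem_filter, mem_univ,
    true_and]
  constructor
  · rintro ⟨hia, hab, hbj, ⟨-, ha1, hb0⟩, hlost⟩
    by_cases hai : a = i
    · exact .inl ⟨hai, hai ▸ hab, hbj, hb0⟩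
    by_cases hbj' : b = j
    · exact .inr ⟨hbj', hia, hbj' ▸ hab, ha1⟩
    refine absurd ((CorrectPair.comp_swap_iff hai ?_ ?_ hbj').2 ⟨hab, ha1, hb0⟩) hlost
    · exact (hab.trans_le hbj).ne
    · exact (hia.trans_lt hab).ne'
  · rintro (⟨rfl, hib, hbj, hb0⟩ | ⟨rfl, hia, haj, ha1⟩)
    · exact ⟨le_rfl, hib, hbj, ⟨hib, hi, hb0⟩, CorrectPair.not_comp_swap_left hj⟩
    · exact ⟨hia, haj, le_rfl, ⟨haj, ha1, hj⟩, CorrectPair.not_comp_swap_right hi⟩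

theorem changedPairOf_injOn : Set.InjOn (changedPairOf ℓ i j) (Set.Iio j) := by
  intro k hk k' hk' h
  simp only [changedPairOf] at h
  split_ifs at h <;> simp only [Prod.mk.injEq] at h
  · exact h.1
  · exact absurd h.2.symm (Set.mem_Iio.1 hk').ne
  · exact absurd h.2 (Set.mem_Iio.1 hk).ne
  · exact h.2

theorem image_changedPairOf (hbin : ∀ k, ℓ k = 0 ∨ ℓ k = 1) (hij : i < j) (hi : ℓ i = 1)
    (hj : ℓ j = 0) :
    (Ico i j).image (changedPairOf ℓ i j) = pairsFromLeft ℓ i j ∪ pairsToRight ℓ i j := by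
  ext ⟨a, b⟩
  simp only [changedPairOf, pairsFromLeft, pairsToRight, mem_image, mem_Ico, mem_union,
    mem_filter, mem_univ, true_and]
  constructor
  · rintro ⟨k, ⟨hik, hkj⟩, hk⟩
    split_ifs at hk with hk1 <;> obtain ⟨rfl, rfl⟩ := Prod.mk.inj hk
    · exact .inr ⟨rfl, hik, hkj, hk1⟩
    · have hki : i ≠ k := by rintro rfl; exact hk1 hi
      exact .inl ⟨rfl, lt_of_le_of_ne hik hki, hkj.le, (hbin k).resolve_right hk1⟩
  · rintro (⟨rfl, hib, hbj, hb0⟩ | ⟨rfl, hia, haj, ha1⟩)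
    · rcases hbj.lt_or_eq with hbj | rfl
      · exact ⟨b, ⟨hib.le, hbj⟩, by simp [hb0]⟩
      · exact ⟨a, ⟨le_rfl, hij⟩, by simp [hi]⟩
    · exact ⟨a, ⟨hia, haj⟩, by simp [ha1]⟩

end ChangedPairs

/-- Identification of the changed pairs (case `ℓ(i) = 1`, `ℓ(j) = 0`): the set of pairs
`(a, b)` with `i ≤ a < b ≤ j` that are correct for `ℓ` but not correct for the swap of
positions `i` and `j` is exactly the union of the pairs `(i, k)` with `i < k ≤ j` and
`ℓ(k) = 0`, and the pairs `(k, j)` with `i ≤ k < j` and `ℓ(k) = 1`; and this set has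
cardinality `j − i`. -/
theorem changed_pairs_identification {N : ℕ} (ℓ : Fin N → ℕ)
    (hbin : ∀ k, ℓ k = 0 ∨ ℓ k = 1)
    (i j : Fin N) (hij : i < j) (hi : ℓ i = 1) (hj : ℓ j = 0) :
    (Finset.univ.filter (fun p : Fin N × Fin N =>
        i ≤ p.1 ∧ p.1 < p.2 ∧ p.2 ≤ j ∧
        CorrectPair ℓ p.1 p.2 ∧ ¬ CorrectPair (ℓ ∘ Equiv.swap i j) p.1 p.2)) =
      (Finset.univ.filter (fun p : Fin N × Fin N =>
          p.1 = i ∧ i < p.2 ∧ p.2 ≤ j ∧ ℓ p.2 = 0)) ∪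
      (Finset.univ.filter (fun p : Fin N × Fin N =>
          p.2 = j ∧ i ≤ p.1 ∧ p.1 < j ∧ ℓ p.1 = 1)) ∧
    (Finset.univ.filter (fun p : Fin N × Fin N =>
        i ≤ p.1 ∧ p.1 < p.2 ∧ p.2 ≤ j ∧
        CorrectPair ℓ p.1 p.2 ∧ ¬ CorrectPair (ℓ ∘ Equiv.swap i j) p.1 p.2)).card =
      j.val - i.val := by
  have hunion : changedPairs ℓ i j = pairsFromLeft ℓ i j ∪ pairsToRight ℓ i j :=
    changedPairs_eq_union hi hj
  refine ⟨hunion, ?_⟩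
  calc (changedPairs ℓ i j).card
      = ((Ico i j).image (changedPairOf ℓ i j)).card := by
        rw [hunion, image_changedPairOf hbin hij hi hj]
    _ = (Ico i j).card :=
        card_image_of_injOn (changedPairOf_injOn.mono fun _ hk => (mem_Ico.1 hk).2)
    _ = j.val - i.val := Fin.card_Ico i j
end

section
/- Multi-class swap formula for MAUC: Let y be a label function on a ranked list of N documents with values in the classes {1,…,C}, and suppose that for every class c the number m_c of positions with label c satisfies 0 < m_c < N. Then for every pair of positions i, j ∈ {1,…,N}, the change in multi-class AUC caused by swapping positions i and j satisfies MAUC(swap_{ij}(y)) − MAUC(y) = Σ_{c=1}^{C} p(c) · (𝟙[y(j) = c] − 𝟙[y(i) = c]) · (j − i) / (m_c · (N − m_c)), where p(c) = m_c / N. -/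
/-- The class-reference binary label function `ℓ^c` for class `c`: `ℓ^c(k) = 1` if
`y(k) = c` and `0` otherwise. -/
def classLabel {N C : ℕ} (y : Fin N → Fin C) (c : Fin C) : Fin N → ℕ :=
  fun k => if y k = c then 1 else 0

/-- `m_c`: the number of positions with label `c`. -/
def classCount {N C : ℕ} (y : Fin N → Fin C) (c : Fin C) : ℕ :=
  (Finset.univ.filter (fun k => y k = c)).card

/-- The class-reference AUC: `AUC(c) = CorrectPairs(ℓ^c) / (m_c · (N − m_c))`. -/
noncomputable def classAUC {N C : ℕ} (y : Fin N → Fin C) (c : Fin C) : ℚ :=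
  (correctPairs (classLabel y c) : ℚ) /
    ((classCount y c : ℚ) * ((N : ℚ) - (classCount y c : ℚ)))

/-- The multi-class AUC: `MAUC(y) = Σ_c AUC(c) · p(c)` with `p(c) = m_c / N`. -/
noncomputable def MAUC {N C : ℕ} (y : Fin N → Fin C) : ℚ :=
  ∑ c : Fin C, classAUC y c * ((classCount y c : ℚ) / (N : ℚ))


open Finset

lemma correctPairs_cast_s11 {N : ℕ} (ℓ : Fin N → ℕ) (hb : ∀ k, ℓ k ≤ 1) :
    ((correctPairs ℓ : ℚ)) =
      ∑ a : Fin N, ∑ b : Fin N, if a < b then (ℓ a : ℚ) * (1 - (ℓ b : ℚ)) else 0 := by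
  rw [correctPairs, Finset.card_filter]
  push_cast
  rw [Fintype.sum_prod_type]
  apply Finset.sum_congr rfl
  intro a _
  apply Finset.sum_congr rfl
  intro b _
  rcases Nat.le_one_iff_eq_zero_or_eq_one.mp (hb a) with h1 | h1 <;>
  rcases Nat.le_one_iff_eq_zero_or_eq_one.mp (hb b) with h2 | h2 <;>
  by_cases hab : a < b <;> simp [h1, h2, hab]

lemma B_eq {N : ℕ} (f : Fin N → ℚ) :
    (∑ a : Fin N, ∑ b : Fin N, if a < b then f a * f b else 0) =
      ((∑ a : Fin N, f a) ^ 2 - ∑ a : Fin N, (f a) ^ 2) / 2 := by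
  have h1 : (∑ a : Fin N, ∑ b : Fin N, if a < b then f a * f b else 0) =
      ∑ a : Fin N, ∑ b : Fin N, if b < a then f a * f b else 0 := by
    rw [Finset.sum_comm]
    apply Finset.sum_congr rfl; intro a _
    apply Finset.sum_congr rfl; intro b _
    rcases lt_trichotomy a b with h | h | h
    · simp [h, h.not_gt, mul_comm]
    · simp [h, lt_irrefl]
    · simp [h, h.not_gt, mul_comm]
  have key : ∀ a : Fin N, (∑ b : Fin N, if a < b then f a * f b else 0) +
      (∑ b : Fin N, if b < a then f a * f b else 0) =
      (∑ b : Fin N, f a * f b) - f a * f a := by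
    intro a
    rw [← Finset.sum_add_distrib]
    have hpt : ∀ b : Fin N, ((if a < b then f a * f b else 0) + if b < a then f a * f b else 0)
        = f a * f b - (if b = a then f a * f b else 0) := by
      intro b
      rcases lt_trichotomy a b with h | h | h
      · simp [h, h.not_gt, (ne_of_gt h)]
      · simp [h, lt_irrefl]
      · simp [h, h.not_gt, (ne_of_lt h)]
    rw [Finset.sum_congr rfl (fun b _ => hpt b), Finset.sum_sub_distrib,
      Finset.sum_ite_eq' Finset.univ a (fun b => f a * f b)]
    simp
  have h2 : (∑ a : Fin N, ∑ b : Fin N, if a < b then f a * f b else 0) +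
      (∑ a : Fin N, ∑ b : Fin N, if a < b then f a * f b else 0)
      = (∑ a : Fin N, f a) ^ 2 - ∑ a : Fin N, (f a) ^ 2 := by
    nth_rewrite 2 [h1]
    rw [← Finset.sum_add_distrib, Finset.sum_congr rfl (fun a _ => key a),
      Finset.sum_sub_distrib]
    congr 1
    · rw [sq, Finset.sum_mul]
      apply Finset.sum_congr rfl; intro a _
      rw [Finset.mul_sum]
    · apply Finset.sum_congr rfl; intro a _; ring
  linarith [h2]

lemma A_eq {N : ℕ} (g : Fin N → ℚ) :
    (∑ a : Fin N, ∑ b : Fin N, if a < b then g a else 0) =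
      ∑ a : Fin N, g a * ((N : ℚ) - 1 - (a.val : ℚ)) := by
  apply Finset.sum_congr rfl; intro a _
  rw [Finset.sum_ite, Finset.sum_const, Finset.sum_const_zero, add_zero, nsmul_eq_mul, mul_comm]
  congr 1
  have h : Finset.univ.filter (fun b => a < b) = Finset.Ioi a := by ext; simp
  rw [h, Fin.card_Ioi]
  have ha : a.val ≤ N - 1 := Nat.le_sub_one_of_lt a.isLt
  have hN : 1 ≤ N := Nat.one_le_iff_ne_zero.mpr (by rintro rfl; exact a.elim0)
  push_cast [Nat.cast_sub ha, Nat.cast_sub hN]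
  ring

lemma delta_double {N : ℕ} (f : Fin N → ℚ) (i j : Fin N) :
    (∑ a : Fin N, ∑ b : Fin N,
        if a < b then f (Equiv.swap i j a) * (1 - f (Equiv.swap i j b)) else 0)
      - (∑ a : Fin N, ∑ b : Fin N, if a < b then f a * (1 - f b) else 0)
      = (f j - f i) * ((j.val : ℚ) - (i.val : ℚ)) := by
  set σ := Equiv.swap i j with hσ
  have split : ∀ g : Fin N → ℚ,
      (∑ a : Fin N, ∑ b : Fin N, if a < b then g a * (1 - g b) else 0)
      = (∑ a : Fin N, ∑ b : Fin N, if a < b then g a else 0)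
        - (∑ a : Fin N, ∑ b : Fin N, if a < b then g a * g b else 0) := by
    intro g
    rw [← Finset.sum_sub_distrib]
    apply Finset.sum_congr rfl; intro a _
    rw [← Finset.sum_sub_distrib]
    apply Finset.sum_congr rfl; intro b _
    by_cases h : a < b <;> simp [h] <;> ring
  have hB : (∑ a : Fin N, ∑ b : Fin N, if a < b then f (σ a) * f (σ b) else 0)
      = ∑ a : Fin N, ∑ b : Fin N, if a < b then f a * f b else 0 := by
    rw [B_eq, B_eq, Equiv.sum_comp σ f, Equiv.sum_comp σ (fun a => f a ^ 2)]
  have hA : (∑ a : Fin N, f (σ a) * ((N : ℚ) - 1 - (a.val : ℚ)))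
      = ∑ a : Fin N, f a * ((N : ℚ) - 1 - ((σ a).val : ℚ)) := by
    rw [← Equiv.sum_comp σ (fun a => f a * ((N : ℚ) - 1 - ((σ a).val : ℚ)))]
    apply Finset.sum_congr rfl; intro a _
    simp [hσ, Equiv.swap_apply_self]
  rw [split (fun a => f (σ a)), split f, hB, A_eq, A_eq, hA]
  have hsum : (∑ a : Fin N, (f a * ((N:ℚ) - 1 - ((σ a).val : ℚ)) - f a * ((N:ℚ) - 1 - (a.val : ℚ))))
      = f i * ((i.val : ℚ) - (j.val : ℚ)) + f j * ((j.val : ℚ) - (i.val : ℚ)) := by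
    have hpt : ∀ a : Fin N,
        (f a * ((N:ℚ) - 1 - ((σ a).val : ℚ)) - f a * ((N:ℚ) - 1 - (a.val : ℚ)))
        = (if a = i then f i * ((i.val : ℚ) - (j.val : ℚ)) else 0)
          + (if a = j then f j * ((j.val : ℚ) - (i.val : ℚ)) else 0) := by
      intro a
      by_cases hai : a = i
      · subst hai
        by_cases haj : a = j
        · subst haj; simp [hσ, Equiv.swap_self]
        · simp [hσ, Equiv.swap_apply_left, haj]; ring
      · by_cases haj : a = j
        · subst haj; simp [hσ, Equiv.swap_apply_right, hai]; ring
        · simp [hσ, Equiv.swap_apply_of_ne_of_ne hai haj, hai, haj]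
    rw [Finset.sum_congr rfl (fun a _ => hpt a), Finset.sum_add_distrib,
      Finset.sum_ite_eq' Finset.univ i, Finset.sum_ite_eq' Finset.univ j]
    simp
  rw [sub_sub_sub_cancel_right, ← Finset.sum_sub_distrib, hsum]
  ring

lemma classCount_swap {N C : ℕ} (y : Fin N → Fin C) (i j : Fin N) (c : Fin C) :
    classCount (y ∘ Equiv.swap i j) c = classCount y c := by
  unfold classCount
  have h : Finset.univ.filter (fun k => (y ∘ Equiv.swap i j) k = c)
      = (Finset.univ.filter (fun k => y k = c)).map (Equiv.swap i j).toEmbedding := by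
    ext k
    simp only [Finset.mem_filter, Finset.mem_map, Finset.mem_univ, true_and,
      Equiv.coe_toEmbedding, Function.comp_apply]
    constructor
    · intro h
      exact ⟨Equiv.swap i j k, h, Equiv.swap_apply_self i j k⟩
    · rintro ⟨a, ha, rfl⟩
      rwa [Equiv.swap_apply_self]
  rw [h, Finset.card_map]

lemma classLabel_le_one {N C : ℕ} (y : Fin N → Fin C) (c : Fin C) (k : Fin N) :
    classLabel y c k ≤ 1 := by
  unfold classLabel; split <;> simp

/-- Multi-class swap formula for MAUC: if every class count satisfies `0 < m_c < N`,
then swapping positions `i` and `j` changes the multi-class AUC by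
`Σ_c p(c) · (𝟙[y(j) = c] − 𝟙[y(i) = c]) · (j − i) / (m_c · (N − m_c))`. -/
theorem deltaMAUC_swap {N C : ℕ} (y : Fin N → Fin C)
    (hc : ∀ c : Fin C, 0 < classCount y c ∧ classCount y c < N)
    (i j : Fin N) :
    MAUC (y ∘ Equiv.swap i j) - MAUC y =
      ∑ c : Fin C,
        ((classCount y c : ℚ) / (N : ℚ)) *
          ((if y j = c then (1 : ℚ) else 0) - (if y i = c then (1 : ℚ) else 0)) *
          ((j.val : ℚ) - (i.val : ℚ)) /
          ((classCount y c : ℚ) * ((N : ℚ) - (classCount y c : ℚ))) := by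
  unfold MAUC
  rw [← Finset.sum_sub_distrib]
  apply Finset.sum_congr rfl
  intro c _
  have hcc := classCount_swap y i j c
  rw [hcc]
  unfold classAUC
  rw [hcc]
  set f : Fin N → ℚ := fun k => ((classLabel y c k : ℕ) : ℚ) with hf
  have hlab : classLabel (y ∘ Equiv.swap i j) c = fun k => classLabel y c (Equiv.swap i j k) := rfl
  have e1 : ((correctPairs (classLabel (y ∘ Equiv.swap i j) c)) : ℚ)
      = ∑ a : Fin N, ∑ b : Fin N,
          if a < b then f (Equiv.swap i j a) * (1 - f (Equiv.swap i j b)) else 0 := by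
    rw [hlab]
    exact correctPairs_cast_s11 _ (fun k => classLabel_le_one y c _)
  have e2 : ((correctPairs (classLabel y c)) : ℚ)
      = ∑ a : Fin N, ∑ b : Fin N, if a < b then f a * (1 - f b) else 0 :=
    correctPairs_cast_s11 _ (classLabel_le_one y c)
  have hδ : ((correctPairs (classLabel (y ∘ Equiv.swap i j) c)) : ℚ)
      - ((correctPairs (classLabel y c)) : ℚ)
      = (f j - f i) * ((j.val : ℚ) - (i.val : ℚ)) := by
    rw [e1, e2]; exact delta_double f i j
  have hfj : f j = if y j = c then (1 : ℚ) else 0 := by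
    simp [hf, classLabel, apply_ite]
  have hfi : f i = if y i = c then (1 : ℚ) else 0 := by
    simp [hf, classLabel, apply_ite]
  rw [hfj, hfi] at hδ
  have : ((correctPairs (classLabel (y ∘ Equiv.swap i j) c)) : ℚ)
      = ((correctPairs (classLabel y c)) : ℚ)
        + ((if y j = c then (1:ℚ) else 0) - (if y i = c then (1:ℚ) else 0))
          * ((j.val : ℚ) - (i.val : ℚ)) := by linarith
  rw [this]
  ring
end
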